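/- If m ≥ 0 and 2^(m+1) ≤ k, then t^(2^m)(e_{2^(m+1)}) = Σ_{i=0}^{m+1} e_{2^i} = e₁ + e₂ + e₄ + ⋯ + e_{2^(m+1)}. -/

import Mathlib

/-- The `j`-th standard basis vector of `(ZMod 2)^k`, 1-indexed; by convention it is `0`
for `j = 0` (and for `j > k`). -/
def eVec (k j : ℕ) : Fin k → ZMod 2 := fun i => if (i : ℕ) + 1 = j then 1 else 0

/-- The involution `s₁`, defined on the standard basis by `s₁ e_j = e_j + e_{j-1}` if
`j ≡ k (mod 2)` and `s₁ e_j = e_j` otherwise. -/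
noncomputable def sOne (k : ℕ) : Module.End (ZMod 2) (Fin k → ZMod 2) :=
  (Pi.basisFun (ZMod 2) (Fin k)).constr (ZMod 2) fun i =>
    if ((i : ℕ) + 1) % 2 = k % 2 then eVec k ((i : ℕ) + 1) + eVec k (i : ℕ)
    else eVec k ((i : ℕ) + 1)

/-- The involution `s₂`, defined on the standard basis by `s₂ e_j = e_j + e_{j-1}` if
`j ≢ k (mod 2)` and `s₂ e_j = e_j` otherwise. -/
noncomputable def sTwo (k : ℕ) : Module.End (ZMod 2) (Fin k → ZMod 2) :=
  (Pi.basisFun (ZMod 2) (Fin k)).constr (ZMod 2) fun i =>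
    if ((i : ℕ) + 1) % 2 ≠ k % 2 then eVec k ((i : ℕ) + 1) + eVec k (i : ℕ)
    else eVec k ((i : ℕ) + 1)

/-- `t = s₂ ∘ s₁`. -/
noncomputable def tEnd (k : ℕ) : Module.End (ZMod 2) (Fin k → ZMod 2) :=
  sTwo k * sOne k

/-! In characteristic 2, for involutions `s₁, s₂` with `d = s₁ + s₂` and `t = s₂ s₁` one has
`d² = t + t⁻¹`, so `d²` commutes with `t` and `t² = 1 + t d²`. Squaring `m` times (Frobenius)
gives `t^(2^(m+1)) = 1 + t^(2^m) d^(2^(m+1))`. Here `d` is the down-shift `e_j ↦ e_{j-1}`, so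
`t^(2^(m+1)) e_{2^(m+2)} = e_{2^(m+2)} + t^(2^m) e_{2^(m+1)}`, and induction from
`t e₂ = e₁ + e₂` gives the sum. -/

theorem mul_mul_swap_of_sq_eq_one {M : Type*} [Monoid M] {s₁ s₂ : M} (h₁ : s₁ ^ 2 = 1)
    (h₂ : s₂ ^ 2 = 1) : s₂ * s₁ * (s₁ * s₂) = 1 := by
  rw [mul_assoc, ← mul_assoc s₁, ← sq, h₁, one_mul, ← sq, h₂]

section Involutions

variable {R : Type*} [Ring R] [CharP R 2] {s₁ s₂ : R}

theorem add_sq_of_sq_eq_one (h₁ : s₁ ^ 2 = 1) (h₂ : s₂ ^ 2 = 1) :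
    (s₁ + s₂) ^ 2 = s₁ * s₂ + s₂ * s₁ := by
  have expand : (s₁ + s₂) ^ 2 = s₁ ^ 2 + s₂ ^ 2 + (s₁ * s₂ + s₂ * s₁) := by noncomm_ring
  rw [expand, h₁, h₂, CharTwo.add_self_eq_zero, zero_add]

theorem commute_mul_add_sq_of_sq_eq_one (h₁ : s₁ ^ 2 = 1) (h₂ : s₂ ^ 2 = 1) :
    Commute (s₂ * s₁) ((s₁ + s₂) ^ 2) := by
  rw [add_sq_of_sq_eq_one h₁ h₂]
  exact .add_right
    ((mul_mul_swap_of_sq_eq_one h₁ h₂).trans (mul_mul_swap_of_sq_eq_one h₂ h₁).symm) (.refl _)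

theorem mul_sq_of_sq_eq_one (h₁ : s₁ ^ 2 = 1) (h₂ : s₂ ^ 2 = 1) :
    (s₂ * s₁) ^ 2 = 1 + s₂ * s₁ * (s₁ + s₂) ^ 2 := by
  rw [add_sq_of_sq_eq_one h₁ h₂, mul_add, mul_mul_swap_of_sq_eq_one h₁ h₂, ← add_assoc,
    CharTwo.add_self_eq_zero, zero_add, sq]

theorem mul_pow_two_pow_succ_of_sq_eq_one (h₁ : s₁ ^ 2 = 1) (h₂ : s₂ ^ 2 = 1) (m : ℕ) :
    (s₂ * s₁) ^ 2 ^ (m + 1) = 1 + (s₂ * s₁) ^ 2 ^ m * (s₁ + s₂) ^ 2 ^ (m + 1) := by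
  rw [pow_succ', pow_mul, mul_sq_of_sq_eq_one h₁ h₂,
    add_pow_char_pow_of_commute 2 m (Commute.one_left _), one_pow,
    (commute_mul_add_sq_of_sq_eq_one h₁ h₂).mul_pow, ← pow_mul, ← pow_succ']

end Involutions

variable {k : ℕ}

theorem eVec_zero : eVec k 0 = 0 := by
  funext i; simp [eVec]

theorem basisFun_eq_eVec (i : Fin k) : Pi.basisFun (ZMod 2) (Fin k) i = eVec k (i + 1) := by
  funext l
  simp [eVec, Pi.single_apply, Fin.ext_iff]

noncomputable def sMap (k : ℕ) (p : ℕ → Prop) [DecidablePred p] :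
    Module.End (ZMod 2) (Fin k → ZMod 2) :=
  (Pi.basisFun (ZMod 2) (Fin k)).constr (ZMod 2) fun i =>
    if p ((i : ℕ) + 1) then eVec k ((i : ℕ) + 1) + eVec k (i : ℕ) else eVec k ((i : ℕ) + 1)

theorem sOne_eq_sMap : sOne k = sMap k (· % 2 = k % 2) := by unfold sOne sMap; rfl

theorem sTwo_eq_sMap : sTwo k = sMap k (· % 2 ≠ k % 2) := by unfold sTwo sMap; rfl

section sMap

variable (p : ℕ → Prop) [DecidablePred p]

theorem sMap_apply_eVec {j : ℕ} (hj : j ≤ k) :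
    sMap k p (eVec k j) = if p j then eVec k j + eVec k (j - 1) else eVec k j := by
  rcases j with _ | i
  · simp [eVec_zero]
  · rw [← basisFun_eq_eVec ⟨i, hj⟩, sMap, Module.Basis.constr_basis, basisFun_eq_eVec]
    rfl

theorem sMap_sq (hp : ∀ j, p (j + 1) → ¬ p j) : sMap k p ^ 2 = 1 := by
  refine (Pi.basisFun (ZMod 2) (Fin k)).ext fun i => ?_
  have hi : (i : ℕ) + 1 ≤ k := i.isLt
  rw [basisFun_eq_eVec, sq, Module.End.mul_apply, Module.End.one_apply, sMap_apply_eVec p hi]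
  split_ifs with h
  · rw [map_add, sMap_apply_eVec p hi, sMap_apply_eVec p (by omega), if_pos h,
      Nat.add_sub_cancel, if_neg (hp _ h), add_assoc, ZModModule.add_self, add_zero]
  · rw [sMap_apply_eVec p hi, if_neg h]

theorem sMap_add_sMap_not_apply_eVec {j : ℕ} (hj : j ≤ k) :
    (sMap k p + sMap k (¬ p ·)) (eVec k j) = eVec k (j - 1) := by
  rw [LinearMap.add_apply, sMap_apply_eVec p hj, sMap_apply_eVec _ hj]
  by_cases h : p j
  · rw [if_pos h, if_neg (not_not_intro h), add_right_comm, ZModModule.add_self, zero_add]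
  · rw [if_neg h, if_pos h, ← add_assoc, ZModModule.add_self, zero_add]

end sMap

theorem sOne_sq : sOne k ^ 2 = 1 := by
  rw [sOne_eq_sMap]
  exact sMap_sq _ fun j h => by omega

theorem sTwo_sq : sTwo k ^ 2 = 1 := by
  rw [sTwo_eq_sMap]
  exact sMap_sq _ fun j h => by omega

theorem sOne_add_sTwo_pow_apply_eVec (n : ℕ) {j : ℕ} (hj : j ≤ k) :
    ((sOne k + sTwo k) ^ n) (eVec k j) = eVec k (j - n) := by
  induction n with
  | zero => rfl
  | succ n ih =>
    rw [pow_succ', Module.End.mul_apply, ih, sOne_eq_sMap, sTwo_eq_sMap,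
      sMap_add_sMap_not_apply_eVec _ (by omega), Nat.sub_sub]

theorem tEnd_apply_eVec_two (hk : 2 ≤ k) : tEnd k (eVec k 2) = eVec k 1 + eVec k 2 := by
  rw [tEnd, Module.End.mul_apply, sOne_eq_sMap, sTwo_eq_sMap, sMap_apply_eVec _ hk]
  split_ifs with h
  · rw [map_add, sMap_apply_eVec _ hk, sMap_apply_eVec (j := 1) _ (by omega), if_neg (by omega),
      if_pos (by omega), Nat.sub_self, eVec_zero, add_zero, add_comm]
  · rw [sMap_apply_eVec _ hk, if_pos h, add_comm]

instance (k : ℕ) [NeZero k] : CharP (Module.End (ZMod 2) (Fin k → ZMod 2)) 2 :=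
  charP_of_injective_algebraMap' (ZMod 2) 2

theorem tEnd_pow_two_pow_succ [NeZero k] (m : ℕ) :
    tEnd k ^ 2 ^ (m + 1) = 1 + tEnd k ^ 2 ^ m * (sOne k + sTwo k) ^ 2 ^ (m + 1) :=
  mul_pow_two_pow_succ_of_sq_eq_one sOne_sq sTwo_sq m

theorem tpow_apply_eVec_pow_two_general (k m : ℕ) (hm : 2 ^ (m + 1) ≤ k) :
    (tEnd k ^ 2 ^ m) (eVec k (2 ^ (m + 1))) =
      ∑ i ∈ Finset.range (m + 2), eVec k (2 ^ i) := by
  have : NeZero k := .of_pos ((Nat.two_pow_pos _).trans_le hm)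
  induction m with
  | zero => simpa [Finset.sum_range_succ] using tEnd_apply_eVec_two hm
  | succ m ih =>
    have hm' : 2 ^ (m + 1) ≤ k := (Nat.pow_le_pow_right two_pos (by omega)).trans hm
    have hshift : 2 ^ (m + 2) - 2 ^ (m + 1) = 2 ^ (m + 1) := by rw [pow_succ _ (m + 1)]; omega
    rw [tEnd_pow_two_pow_succ, LinearMap.add_apply, Module.End.one_apply, Module.End.mul_apply,
      sOne_add_sTwo_pow_apply_eVec _ hm, hshift, ih hm', Finset.sum_range_succ _ (m + 2), add_comm]

/-- If `m ≥ 0` and `2^(m+1) ≤ k`, then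
`t^(2^m)(e_{2^(m+1)}) = Σ_{i=0}^{m+1} e_{2^i} = e₁ + e₂ + e₄ + ⋯ + e_{2^(m+1)}`. -/
theorem tpow_apply_eVec_pow_two (k m : ℕ) (hk : 1 ≤ k) (hm : 2 ^ (m + 1) ≤ k) :
    (tEnd k ^ 2 ^ m) (eVec k (2 ^ (m + 1))) =
      ∑ i ∈ Finset.range (m + 2), eVec k (2 ^ i) :=
  tpow_apply_eVec_pow_two_general k m hm
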